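/- arXiv:1909.03547 — 6 statements merged into one kernel-verified Lean document; each statement's English description precedes it below -/
import Mathlib

section
/- If X and Y are subsets of R^d such that conv(X) ∩ conv(Y) ≠ ∅, then there exist subsets S₁ ⊆ X and S₂ ⊆ Y with |S₁| + |S₂| ≤ d + 2 such that conv(S₁) ∩ conv(S₂) ≠ ∅. -/
/-!
Send `x ∈ X` to `(x, 1)` and `y ∈ Y` to `(-y, -1)` in `E × 𝕜`. The origin lies on a segment
joining `(x, 1)` to `(-y, -1)` exactly when it is their midpoint, i.e. when `x = y`; hence
`conv X ∩ conv Y ≠ ∅` if and only if the origin lies in the convex hull of the lifted points.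
Carathéodory's theorem in the `(d + 1)`-dimensional space `E × 𝕜` then expresses the origin
through at most `d + 2` lifted points, and these split into the two required subsets.
-/

open Finset Module Set

theorem Finset.exists_card_add_card_le_of_subset_image_union {α β γ : Type*} [DecidableEq β]
    {f : α → β} {g : γ → β} (hf : f.Injective) (hg : g.Injective) {X : Set α} {Y : Set γ}
    {t : Finset β} (ht : ↑t ⊆ f '' X ∪ g '' Y) :
    ∃ (S₁ : Finset α) (S₂ : Finset γ), ↑S₁ ⊆ X ∧ ↑S₂ ⊆ Y ∧ #S₁ + #S₂ ≤ #t ∧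
      ↑t ⊆ f '' S₁ ∪ g '' S₂ := by
  obtain ⟨t₁, t₂, rfl, ht₁, ht₂⟩ := Finset.subset_union_elim ht
  obtain ⟨S₁, hS₁X, rfl⟩ := Finset.subset_set_image_iff.1 ht₁
  obtain ⟨S₂, hS₂Y, rfl⟩ := Finset.subset_set_image_iff.1 (ht₂.trans Set.sdiff_subset)
  have hdisj : Disjoint (S₁.image f) (S₂.image g) := by
    rw [← Finset.disjoint_coe]
    exact Set.disjoint_of_subset_left ht₁ (Set.disjoint_sdiff_right.mono_right ht₂)
  refine ⟨S₁, S₂, hS₁X, hS₂Y, ?_, by simp⟩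
  rw [card_union_of_disjoint hdisj, card_image_of_injective _ hf, card_image_of_injective _ hg]

variable {𝕜 E : Type*} [Field 𝕜] [AddCommGroup E] [Module 𝕜 E]

variable (𝕜 E) in
def liftOne : E →ᵃ[𝕜] E × 𝕜 where
  toFun x := (x, 1)
  linear := LinearMap.inl 𝕜 E 𝕜
  map_vadd' p v := by simp

@[simp] theorem liftOne_apply (x : E) : liftOne 𝕜 E x = (x, 1) := rfl

theorem liftOne_injective : Function.Injective (liftOne 𝕜 E) :=
  fun _ _ h => (Prod.ext_iff.1 h).1

variable [LinearOrder 𝕜] [IsStrictOrderedRing 𝕜]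

theorem exists_finset_card_le_finrank_add_one_of_mem_convexHull [FiniteDimensional 𝕜 E]
    {s : Set E} {x : E} (hx : x ∈ convexHull 𝕜 s) :
    ∃ t : Finset E, ↑t ⊆ s ∧ #t ≤ finrank 𝕜 E + 1 ∧ x ∈ convexHull 𝕜 (t : Set E) := by
  rw [convexHull_eq_union] at hx
  simp only [mem_iUnion, exists_prop] at hx
  obtain ⟨t, hts, ht_indep, hxt⟩ := hx
  refine ⟨t, hts, ?_, hxt⟩
  have := ht_indep.card_le_finrank_succ
  rw [Fintype.card_coe] at this
  exact this.trans (Nat.add_le_add_right (Submodule.finrank_le _) 1)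

theorem zero_mem_segment_liftOne_neg_liftOne_iff {a b : E} :
    (0 : E × 𝕜) ∈ segment 𝕜 (liftOne 𝕜 E a) (-liftOne 𝕜 E b) ↔ a = b := by
  constructor
  · rintro ⟨s, t, -, -, hst, h⟩
    simp only [liftOne_apply, Prod.neg_mk, Prod.smul_mk, Prod.mk_add_mk, Prod.mk_eq_zero,
      smul_eq_mul, mul_one, mul_neg, smul_neg] at h
    obtain ⟨rfl, rfl⟩ : s = 1 / 2 ∧ t = 1 / 2 := by constructor <;> linarith [h.2]
    have h₁ := h.1
    rwa [← smul_neg, ← smul_add, smul_eq_zero_iff_right (by norm_num), add_neg_eq_zero] at h₁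
  · rintro rfl
    refine ⟨1 / 2, 1 / 2, by norm_num, by norm_num, by norm_num, ?_⟩
    simp [Prod.ext_iff]

theorem zero_mem_convexHull_liftOne_union_iff {A B : Set E} :
    (0 : E × 𝕜) ∈ convexHull 𝕜 (liftOne 𝕜 E '' A ∪ (-liftOne 𝕜 E) '' B) ↔
      (convexHull 𝕜 A ∩ convexHull 𝕜 B).Nonempty := by
  rcases A.eq_empty_or_nonempty with rfl | hA
  · rw [image_empty, empty_union, ← AffineMap.image_convexHull]
    simp [Prod.ext_iff]
  rcases B.eq_empty_or_nonempty with rfl | hB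
  · rw [image_empty, union_empty, ← AffineMap.image_convexHull]
    simp [Prod.ext_iff]
  rw [convexHull_union (hA.image _) (hB.image _), ← AffineMap.image_convexHull,
    ← AffineMap.image_convexHull, mem_convexJoin]
  simp only [Set.exists_mem_image, AffineMap.coe_neg, Pi.neg_apply,
    zero_mem_segment_liftOne_neg_liftOne_iff, exists_eq_right', Set.Nonempty, mem_inter_iff]

theorem exists_finsets_card_add_card_le_finrank_add_two [FiniteDimensional 𝕜 E] {X Y : Set E}
    (h : (convexHull 𝕜 X ∩ convexHull 𝕜 Y).Nonempty) :
    ∃ S₁ S₂ : Finset E, ↑S₁ ⊆ X ∧ ↑S₂ ⊆ Y ∧ #S₁ + #S₂ ≤ finrank 𝕜 E + 2 ∧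
      (convexHull 𝕜 (S₁ : Set E) ∩ convexHull 𝕜 (S₂ : Set E)).Nonempty := by
  classical
  have h₀ : (0 : E × 𝕜) ∈ convexHull 𝕜 (liftOne 𝕜 E '' X ∪ (-liftOne 𝕜 E) '' Y) :=
    zero_mem_convexHull_liftOne_union_iff.2 h
  obtain ⟨t, htXY, ht_card, ht⟩ := exists_finset_card_le_finrank_add_one_of_mem_convexHull h₀
  obtain ⟨S₁, S₂, hS₁X, hS₂Y, hS_card, htS⟩ :=
    Finset.exists_card_add_card_le_of_subset_image_union liftOne_injective
      (neg_injective.comp liftOne_injective) htXY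
  refine ⟨S₁, S₂, hS₁X, hS₂Y, ?_,
    zero_mem_convexHull_liftOne_union_iff.1 (convexHull_mono htS ht)⟩
  calc #S₁ + #S₂ ≤ #t := hS_card
    _ ≤ finrank 𝕜 (E × 𝕜) + 1 := ht_card
    _ = finrank 𝕜 E + 2 := by rw [Module.finrank_prod, Module.finrank_self]

/-- Symmetric variant of Carathéodory's theorem. -/
theorem symmetric_caratheodory (d : ℕ) (X Y : Set (EuclideanSpace ℝ (Fin d)))
    (h : (convexHull ℝ X ∩ convexHull ℝ Y).Nonempty) :
    ∃ S₁ S₂ : Finset (EuclideanSpace ℝ (Fin d)),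
      ↑S₁ ⊆ X ∧ ↑S₂ ⊆ Y ∧ S₁.card + S₂.card ≤ d + 2 ∧
      (convexHull ℝ (S₁ : Set (EuclideanSpace ℝ (Fin d))) ∩
        convexHull ℝ (S₂ : Set (EuclideanSpace ℝ (Fin d)))).Nonempty := by
  simpa only [finrank_euclideanSpace_fin] using exists_finsets_card_add_card_le_finrank_add_two h
end

section
/- Let Q ⊆ R^d be a bounded polytope that can be represented as the intersection of n halfspaces. Then Q can be covered by at most n^d simplices of the form conv({x₀, ..., x_d}) where each x_i is a vertex of Q. -/
/-!
Induct on the dimension of `Q`. Pick a vertex `v` of `Q`. Following the ray from `v` through any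
other point `x ∈ Q` until it leaves `Q` shows that `x` lies on a segment from `v` to a point of a
facet `Q ∩ {fᵢ = bᵢ}` with `fᵢ v < bᵢ`. There are at most `n` such facets; each is a face of `Q`
(so its vertices are vertices of `Q`) of smaller dimension, hence covered by `n ^ (k - 1)`
simplices, and coning these from `v` covers `Q` by `n ^ k` simplices.
-/

open Set Module Finset Bornology

section SimplexCover

variable {E : Type*} [AddCommGroup E] [Module ℝ E]

def CoveredByVertexSimplices (Q : Set E) (k m : ℕ) : Prop :=
  ∃ T : Finset (Fin (k + 1) → E), T.card ≤ m ∧ (∀ g ∈ T, ∀ j, g j ∈ Q.extremePoints ℝ) ∧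
    Q ⊆ ⋃ g ∈ T, convexHull ℝ (range g)

theorem CoveredByVertexSimplices.mono {Q : Set E} {k m m' : ℕ}
    (h : CoveredByVertexSimplices Q k m) (hm : m ≤ m') : CoveredByVertexSimplices Q k m' :=
  let ⟨T, hcard, hext, hcov⟩ := h
  ⟨T, hcard.trans hm, hext, hcov⟩

theorem CoveredByVertexSimplices.of_subsingleton {Q : Set E} (hQ : Q.Subsingleton) (k : ℕ)
    {m : ℕ} (hm : 1 ≤ m) : CoveredByVertexSimplices Q k m := by
  rcases hQ.eq_empty_or_singleton with rfl | ⟨q, rfl⟩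
  · exact ⟨∅, by simp, by simp, by simp⟩
  · exact ⟨{fun _ => q}, by simpa using hm, by simp, by simp⟩

theorem CoveredByVertexSimplices.cone {ι : Type*} {Q : Set E} {v : E}
    (hv : v ∈ Q.extremePoints ℝ) {F : ι → Set E} {I : Finset ι} {k m : ℕ}
    (hF : ∀ i ∈ I, IsExtreme ℝ Q (F i)) (hcov : ∀ i ∈ I, CoveredByVertexSimplices (F i) k m)
    (hseg : ∀ x ∈ Q, ∃ i ∈ I, ∃ y ∈ F i, x ∈ segment ℝ v y) :
    CoveredByVertexSimplices Q (k + 1) (I.card * m) := by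
  classical
  choose! T hTcard hText hTcov using hcov
  let cone : (Fin (k + 1) → E) → Fin (k + 2) → E := fun g => Fin.cons v g
  refine ⟨I.biUnion fun i => (T i).image cone,
    card_biUnion_le_card_mul _ _ _ fun i hi => card_image_le.trans (hTcard i hi), ?_, ?_⟩
  · simp only [Finset.mem_biUnion, Finset.mem_image]
    rintro _ ⟨i, hi, g, hg, rfl⟩ j
    refine Fin.cases hv (fun j => ?_) j
    exact (hF i hi).extremePoints_subset_extremePoints (hText i hi g hg j)
  · intro x hx
    obtain ⟨i, hi, y, hy, hxy⟩ := hseg x hx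
    obtain ⟨g, hg, hyg⟩ := mem_iUnion₂.1 (hTcov i hi hy)
    have hv' : v ∈ convexHull ℝ (range (cone g)) := subset_convexHull ℝ _ ⟨0, rfl⟩
    have hy' : y ∈ convexHull ℝ (range (cone g)) :=
      convexHull_mono (range_comp_subset_range Fin.succ (cone g)) hyg
    exact mem_iUnion₂.2 ⟨cone g, Finset.mem_biUnion.2 ⟨i, hi, Finset.mem_image_of_mem _ hg⟩,
      (convex_convexHull ℝ _).segment_subset hv' hy' hxy⟩

end SimplexCover

section AffineSpan

variable {k V P : Type*} [DivisionRing k] [AddCommGroup V] [Module k V] [AddTorsor V P]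
  [FiniteDimensional k V]

theorem subsingleton_of_finrank_direction_affineSpan_eq_zero {s : Set P}
    (h : finrank k (affineSpan k s).direction = 0) : s.Subsingleton := by
  rwa [Submodule.finrank_eq_zero, direction_affineSpan, vectorSpan_eq_bot_iff_subsingleton] at h

theorem finrank_direction_affineSpan_lt {s t : Set P} (hst : s ⊆ t) (hs : s.Nonempty) {p : P}
    (hp : p ∈ t) (hps : p ∉ affineSpan k s) :
    finrank k (affineSpan k s).direction < finrank k (affineSpan k t).direction := by
  have hlt : affineSpan k s < affineSpan k t :=
    lt_of_le_not_ge (affineSpan_mono k hst) fun hts => hps (hts (subset_affineSpan k t hp))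
  exact Submodule.finrank_lt_finrank_of_lt
    (AffineSubspace.direction_lt_of_nonempty hlt ((affineSpan_nonempty k).2 hs))

end AffineSpan

section ConstraintFace

variable {E : Type*} [AddCommGroup E] [Module ℝ E] [TopologicalSpace E] {ι : Type*}

theorem isExposed_setOf_apply_eq {A : Set E} {l : E →L[ℝ] ℝ} {c : ℝ} (hA : ∀ x ∈ A, l x ≤ c) :
    IsExposed ℝ A {x ∈ A | l x = c} := by
  rintro ⟨z, hzA, hz⟩
  refine ⟨l, Set.ext fun x => ⟨fun ⟨hx, hxc⟩ => ⟨hx, fun y hy => hxc ▸ hA y hy⟩,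
    fun ⟨hx, hmax⟩ => ⟨hx, (hA x hx).antisymm (hz ▸ hmax z hzA)⟩⟩⟩

theorem apply_lineMap_eq_add_mul (l : E →L[ℝ] ℝ) (v x : E) (t : ℝ) :
    l (AffineMap.lineMap v x t) = l v + t * (l x - l v) := by
  simp only [AffineMap.lineMap_apply_module', map_add, map_smul, map_sub, smul_eq_mul]
  ring

def constraintFace (f : ι → E →L[ℝ] ℝ) (b : ι → ℝ) (S : Set ι) : Set E :=
  {x | (∀ i, f i x ≤ b i) ∧ ∀ i ∈ S, f i x = b i}

variable {f : ι → E →L[ℝ] ℝ} {b : ι → ℝ}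

theorem constraintFace_insert (i : ι) (S : Set ι) :
    constraintFace f b (insert i S) = {x ∈ constraintFace f b S | f i x = b i} := by
  ext x
  simp only [constraintFace, mem_insert_iff, forall_eq_or_imp, mem_ofPred_eq]
  tauto

theorem isExtreme_constraintFace_insert (i : ι) (S : Set ι) :
    IsExtreme ℝ (constraintFace f b S) (constraintFace f b (insert i S)) := by
  rw [constraintFace_insert]
  exact (isExposed_setOf_apply_eq fun x hx => hx.1 i).isExtreme

theorem isClosed_constraintFace (S : Set ι) : IsClosed (constraintFace f b S) := by
  simp only [constraintFace, ofPred_and, ofPred_forall]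
  exact (isClosed_iInter fun i => isClosed_le (f i).continuous continuous_const).inter
    (isClosed_iInter fun i => isClosed_iInter fun _ => isClosed_eq (f i).continuous continuous_const)

theorem finrank_direction_affineSpan_constraintFace_insert_lt [FiniteDimensional ℝ E]
    {S : Set ι} {i : ι} {v : E} (hv : v ∈ constraintFace f b S) (hi : f i v < b i)
    (hF : (constraintFace f b (insert i S)).Nonempty) :
    finrank ℝ (affineSpan ℝ (constraintFace f b (insert i S))).direction <
      finrank ℝ (affineSpan ℝ (constraintFace f b S)).direction := by
  refine finrank_direction_affineSpan_lt (isExtreme_constraintFace_insert i S).1 hF hv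
    fun hvF => hi.ne ?_
  have hlevel : EqOn (f i).toAffineMap (AffineMap.const ℝ E (b i))
      (constraintFace f b (insert i S)) := fun x hx => hx.2 i (mem_insert i S)
  exact AffineMap.eqOn_affineSpan hlevel hvF

end ConstraintFace

section BoundedConstraintFace

variable {E : Type*} [NormedAddCommGroup E] [NormedSpace ℝ E] {ι : Type*}
  {f : ι → E →L[ℝ] ℝ} {b : ι → ℝ}

theorem exists_lt_apply_of_isBounded {S : Set ι} (hQ : IsBounded (constraintFace f b S))
    {v x : E} (hv : v ∈ constraintFace f b S) (hx : x ∈ constraintFace f b S) (hxv : x ≠ v) :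
    ∃ i, f i v < f i x := by
  by_contra! h
  have hray : ∀ t : ℝ, 0 ≤ t → AffineMap.lineMap v x t ∈ constraintFace f b S := by
    refine fun t ht => ⟨fun i => ?_, fun i hi => ?_⟩ <;> rw [apply_lineMap_eq_add_mul]
    · nlinarith [h i, hv.1 i]
    · rw [hv.2 i hi, hx.2 i hi]
      ring
  obtain ⟨C, hC⟩ := Metric.isBounded_iff.1 hQ
  have hdist : 0 < dist v x := dist_pos.2 hxv.symm
  have hfar := hC (hray 0 le_rfl) (hray (|C| / dist v x + 1) (by positivity))
  rw [dist_lineMap_lineMap, Real.dist_eq, zero_sub, abs_neg, abs_of_pos (by positivity), add_mul,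
    div_mul_cancel₀ _ hdist.ne'] at hfar
  linarith [le_abs_self C]

theorem exists_mem_segment_of_isBounded [Fintype ι] {S : Set ι}
    (hQ : IsBounded (constraintFace f b S)) {v x : E} (hv : v ∈ constraintFace f b S)
    (hx : x ∈ constraintFace f b S) (hxv : x ≠ v) :
    ∃ i, f i v < b i ∧ ∃ y ∈ constraintFace f b (insert i S), x ∈ segment ℝ v y := by
  -- the ray `t ↦ lineMap v x t` meets the hyperplane `f j = b j` at `t = exitTime j`
  let exitTime : ι → ℝ := fun j => (b j - f j v) / (f j x - f j v)
  obtain ⟨i₀, hi₀⟩ := exists_lt_apply_of_isBounded hQ hv hx hxv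
  obtain ⟨i, hi, hmin⟩ := (univ.filter fun j => f j v < f j x).exists_min_image exitTime
    ⟨i₀, by simpa using hi₀⟩
  simp only [Finset.mem_filter, Finset.mem_univ, true_and] at hi hmin
  have hslope : 0 < f i x - f i v := sub_pos.2 hi
  have ht : 1 ≤ exitTime i := (one_le_div hslope).2 (by linarith [hx.1 i])
  refine ⟨i, by linarith [hx.1 i], AffineMap.lineMap v x (exitTime i),
    ⟨fun j => ?_, fun j hj => ?_⟩, ?_⟩
  · rw [apply_lineMap_eq_add_mul]
    by_cases hj : f j v < f j x
    · linarith [(le_div_iff₀ (sub_pos.2 hj)).1 (hmin j hj)]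
    · nlinarith [hv.1 j]
  · rw [apply_lineMap_eq_add_mul]
    rcases hj with rfl | hj
    · rw [div_mul_cancel₀ _ hslope.ne']
      ring
    · rw [hv.2 j hj, hx.2 j hj]
      ring
  · have ht₀ : 0 < exitTime i := zero_lt_one.trans_le ht
    refine ⟨1 - (exitTime i)⁻¹, (exitTime i)⁻¹, sub_nonneg.2 (inv_le_one_of_one_le₀ ht),
      inv_nonneg.2 ht₀.le, by ring, ?_⟩
    rw [AffineMap.lineMap_apply_module', smul_add, smul_smul, inv_mul_cancel₀ ht₀.ne']
    module

theorem coveredByVertexSimplices_constraintFace [FiniteDimensional ℝ E] [Fintype ι] [Nonempty ι]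
    (k : ℕ) (S : Set ι) (hQ : IsBounded (constraintFace f b S))
    (hdim : finrank ℝ (affineSpan ℝ (constraintFace f b S)).direction ≤ k) :
    CoveredByVertexSimplices (constraintFace f b S) k (Fintype.card ι ^ k) := by
  induction k generalizing S with
  | zero =>
    exact .of_subsingleton (subsingleton_of_finrank_direction_affineSpan_eq_zero
      (Nat.le_zero.1 hdim)) 0 (by simp)
  | succ k ih =>
    rcases (constraintFace f b S).subsingleton_or_nontrivial with hsub | hnt
    · exact .of_subsingleton hsub _ (Nat.one_le_pow _ _ Fintype.card_pos)
    obtain ⟨v, hv⟩ := (Metric.isCompact_of_isClosed_isBounded (isClosed_constraintFace S)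
      hQ).extremePoints_nonempty hnt.nonempty
    have hfacet : ∀ i, f i v < b i →
        CoveredByVertexSimplices (constraintFace f b (insert i S)) k (Fintype.card ι ^ k) := by
      intro i hi
      refine ih _ (hQ.subset (isExtreme_constraintFace_insert i S).1) ?_
      rcases (constraintFace f b (insert i S)).eq_empty_or_nonempty with hF | hF
      · rw [hF, AffineSubspace.span_empty, AffineSubspace.direction_bot, finrank_bot]
        exact k.zero_le
      · exact Nat.lt_succ_iff.1
          ((finrank_direction_affineSpan_constraintFace_insert_lt hv.1 hi hF).trans_le hdim)
    have hseg : ∀ x ∈ constraintFace f b S, ∃ i ∈ univ.filter fun i => f i v < b i,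
        ∃ y ∈ constraintFace f b (insert i S), x ∈ segment ℝ v y := by
      intro x hx
      obtain ⟨z, hz, hzv⟩ := hnt.exists_ne v
      by_cases hxv : x = v
      · obtain ⟨i, hi, y, hy, -⟩ := exists_mem_segment_of_isBounded hQ hv.1 hz hzv
        exact ⟨i, by simpa using hi, y, hy, hxv ▸ left_mem_segment ℝ v y⟩
      · obtain ⟨i, hi, hxy⟩ := exists_mem_segment_of_isBounded hQ hv.1 hx hxv
        exact ⟨i, by simpa using hi, hxy⟩
    refine (CoveredByVertexSimplices.cone hv (fun i _ => isExtreme_constraintFace_insert i S)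
      (fun i hi => hfacet i (by simpa using hi)) hseg).mono ?_
    rw [pow_succ']
    exact Nat.mul_le_mul_right _ (card_le_univ _)

end BoundedConstraintFace

/-- Dual variant of Carathéodory's theorem: a bounded polytope given as an intersection of
`n` halfspaces can be covered by at most `n ^ d` simplices whose vertices are vertices
(extreme points) of the polytope. -/
theorem dual_caratheodory (d n : ℕ) (A : Fin n → EuclideanSpace ℝ (Fin d)) (b : Fin n → ℝ)
    (Q : Set (EuclideanSpace ℝ (Fin d)))
    (hQ : Q = {x | ∀ i, (inner ℝ (A i) x : ℝ) ≤ b i})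
    (hbdd : Bornology.IsBounded Q) :
    ∃ T : Finset (Fin (d + 1) → EuclideanSpace ℝ (Fin d)),
      T.card ≤ n ^ d ∧
      (∀ f ∈ T, ∀ i, f i ∈ Set.extremePoints ℝ Q) ∧
      Q ⊆ ⋃ f ∈ T, convexHull ℝ (Set.range f) := by
  rcases isEmpty_or_nonempty (Fin n) with hn | hn
  · have : Subsingleton (EuclideanSpace ℝ (Fin d)) := by
      by_contra hE
      rw [not_subsingleton_iff_nontrivial] at hE
      exact NormedSpace.unbounded_univ ℝ _ (by simpa [hQ] using hbdd)
    obtain rfl : d = 0 := by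
      simpa using finrank_eq_zero_of_subsingleton (R := ℝ) (M := EuclideanSpace ℝ (Fin d))
    exact CoveredByVertexSimplices.of_subsingleton subsingleton_of_subsingleton 0 (by simp)
  have hdim : finrank ℝ (affineSpan ℝ Q).direction ≤ d :=
    (Submodule.finrank_le _).trans_eq finrank_euclideanSpace_fin
  obtain rfl : Q = constraintFace (fun i => innerSL ℝ (A i)) b ∅ := by simp [hQ, constraintFace]
  have hcover := coveredByVertexSimplices_constraintFace d ∅ hbdd hdim
  rw [Fintype.card_fin] at hcover
  exact hcover
end

section
/- Let V = {v_z : z ∈ {0,1}^k} be 2^k distinct points on the unit circle in R², indexed by binary strings of length k. For x, y ∈ {0,1}^k, let A = {v_x} and B = {v_z : ∃i, z_i = y_i = 1}. Then A ∩ B ≠ ∅ if and only if there exists i with x_i = y_i = 1; moreover if A ∩ B = ∅ then conv(A) ∩ conv(B) = ∅. -/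
/-- Reduction from set disjointness to promise convex set disjointness on points of the unit
circle in the plane. -/
theorem disj_reduction_circle (k : ℕ) (v : (Fin k → Bool) → EuclideanSpace ℝ (Fin 2))
    (hinj : Function.Injective v) (hcirc : ∀ z, ‖v z‖ = 1)
    (x y : Fin k → Bool)
    (A B : Set (EuclideanSpace ℝ (Fin 2)))
    (hA : A = {v x})
    (hB : B = {p | ∃ z : Fin k → Bool, p = v z ∧ ∃ i, z i = true ∧ y i = true}) :
    ((A ∩ B).Nonempty ↔ ∃ i, x i = true ∧ y i = true) ∧
      (A ∩ B = ∅ → convexHull ℝ A ∩ convexHull ℝ B = ∅) := by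
  subst hA hB
  constructor
  · constructor
    · rintro ⟨p, hp, z, hz, i, hzi, hyi⟩
      simp only [Set.mem_singleton_iff] at hp
      have : z = x := hinj (hz ▸ hp)
      exact ⟨i, this ▸ hzi, hyi⟩
    · rintro ⟨i, hxi, hyi⟩
      exact ⟨v x, rfl, x, rfl, i, hxi, hyi⟩
  · intro hdisj
    rw [convexHull_singleton]
    rw [Set.eq_empty_iff_forall_notMem]
    rintro p ⟨hp1, hp2⟩
    simp only [Set.mem_singleton_iff] at hp1
    subst hp1
    -- v x is not in B
    have hvxB : v x ∉ {p | ∃ z : Fin k → Bool, p = v z ∧ ∃ i, z i = true ∧ y i = true} := by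
      intro h
      have : (({v x} : Set (EuclideanSpace ℝ (Fin 2))) ∩
          {p | ∃ z : Fin k → Bool, p = v z ∧ ∃ i, z i = true ∧ y i = true}).Nonempty :=
        ⟨v x, rfl, h⟩
      rw [hdisj] at this
      exact this.ne_empty rfl
    -- B is contained in the open halfspace {p | ⟪v x, p⟫ < 1}
    have hsub : {p : EuclideanSpace ℝ (Fin 2) |
        ∃ z : Fin k → Bool, p = v z ∧ ∃ i, z i = true ∧ y i = true} ⊆
        {p | inner ℝ (v x) p < (1 : ℝ)} := by
      rintro p ⟨z, hz, hi⟩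
      subst hz
      have hne : v x ≠ v z := by
        intro h
        exact hvxB ⟨z, h, hi⟩
      have hle : inner ℝ (v x) (v z) ≤ (1 : ℝ) := by
        calc inner ℝ (v x) (v z) ≤ ‖v x‖ * ‖v z‖ := real_inner_le_norm _ _
        _ = 1 := by rw [hcirc, hcirc]; ring
      have hne1 : inner ℝ (v x) (v z) ≠ (1 : ℝ) := by
        intro h
        exact hne ((inner_eq_one_iff_of_norm_eq_one (hcirc x) (hcirc z)).mp h)
      exact lt_of_le_of_ne hle hne1
    have hconv : Convex ℝ {p : EuclideanSpace ℝ (Fin 2) | inner ℝ (v x) p < (1 : ℝ)} :=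
      convex_halfSpace_lt ⟨fun a b => inner_add_right _ _ _,
        fun c a => real_inner_smul_right _ _ _⟩ 1
    have := convexHull_min hsub hconv hp2
    simp only [Set.mem_setOf_eq, real_inner_self_eq_norm_sq, hcirc x] at this
    norm_num at this
end

section
/- For j ∈ [c], define the lift g_j : R² → R^{3c} by placing (x₁, x₂, 1) in coordinates 3j−2, 3j−1, 3j and 0 elsewhere. Let X_j, Y_j ⊆ R² for j = 1,...,c, and set X = ⋃_j g_j(X_j), Y = ⋃_j g_j(Y_j). If conv(X_j) ∩ conv(Y_j) = ∅ for every j, then conv(X) ∩ conv(Y) = ∅. -/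
/-- The `j`-th lift `ℝ² → ℝ^{3c}`, placing `(x₁, x₂, 1)` in coordinates `3j, 3j+1, 3j+2`
(0-indexed) and `0` elsewhere. -/
noncomputable def liftMap (c : ℕ) (j : Fin c) (x : Fin 2 → ℝ) : Fin (3 * c) → ℝ :=
  fun i =>
    if (i : ℕ) = 3 * (j : ℕ) then x 0
    else if (i : ℕ) = 3 * (j : ℕ) + 1 then x 1
    else if (i : ℕ) = 3 * (j : ℕ) + 2 then 1
    else 0

/-- The index `3j + k` in `Fin (3c)`. -/
def idx3 (c : ℕ) (j : Fin c) (k : Fin 3) : Fin (3 * c) :=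
  ⟨3 * j + k, by have := j.isLt; have := k.isLt; omega⟩

lemma liftMap_idx3 (c : ℕ) (J j : Fin c) (x : Fin 2 → ℝ) (k : Fin 3) :
    liftMap c J x (idx3 c j k) = if J = j then ![x 0, x 1, (1:ℝ)] k else 0 := by
  by_cases hJj : J = j
  · subst hJj
    fin_cases k <;> simp [liftMap, idx3]
  · have hne : (J : ℕ) ≠ (j : ℕ) := fun hh => hJj (Fin.ext hh)
    fin_cases k <;>
      simp only [liftMap, idx3, if_neg hJj] <;>
      grind

/-- Structure of points of the convex hull of a union of lifted sets: some block `j` has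
positive weight (coordinate `3j+2`), and whenever a block has positive weight, the normalized
block coordinates give a point of the convex hull of `S j`. -/
lemma hull_struct (c : ℕ) (S : Fin c → Set (Fin 2 → ℝ)) (z : Fin (3 * c) → ℝ)
    (hz : z ∈ convexHull ℝ (⋃ j, liftMap c j '' S j)) :
    (∃ j, 0 < z (idx3 c j 2)) ∧
    ∀ j, 0 < z (idx3 c j 2) →
      (fun k : Fin 2 => z (idx3 c j (k.castLE (by norm_num))) / z (idx3 c j 2))
        ∈ convexHull ℝ (S j) := by
  rcases Nat.eq_zero_or_pos c with hc | hc
  · subst hc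
    simp only [Set.iUnion_of_empty, convexHull_empty, Set.mem_empty_iff_false] at hz
  rw [convexHull_eq] at hz
  obtain ⟨ι, t, w, f, hw, hsum, hmem, hcm⟩ := hz
  have hch : ∀ i : ι, ∃ (J : Fin c) (x : Fin 2 → ℝ), i ∈ t → x ∈ S J ∧ f i = liftMap c J x := by
    intro i
    by_cases hi : i ∈ t
    · obtain ⟨U, ⟨J, rfl⟩, hU⟩ := hmem i hi
      obtain ⟨x, hx, hfx⟩ := hU
      exact ⟨J, x, fun _ => ⟨hx, hfx.symm⟩⟩
    · exact ⟨⟨0, hc⟩, fun _ => 0, fun hit => absurd hit hi⟩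
  choose J g hJg using hch
  have hzeq : (∑ i ∈ t, w i • f i) = z := by
    have := hcm
    rwa [Finset.centerMass, hsum, inv_one, one_smul] at this
  -- coordinate computation
  have hcoord : ∀ (j : Fin c) (k : Fin 3),
      z (idx3 c j k) = ∑ i ∈ t.filter (fun i => J i = j), w i * ![g i 0, g i 1, (1:ℝ)] k := by
    intro j k
    rw [← hzeq]
    rw [Finset.sum_apply]
    rw [Finset.sum_filter]
    refine Finset.sum_congr rfl fun i hi => ?_
    obtain ⟨-, hfi⟩ := hJg i hi
    rw [Pi.smul_apply, hfi, liftMap_idx3, smul_eq_mul]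
    by_cases hJi : J i = j
    · rw [if_pos hJi, if_pos hJi]
    · rw [if_neg hJi, if_neg hJi, mul_zero]
  have hmu : ∀ j : Fin c, z (idx3 c j 2) = ∑ i ∈ t.filter (fun i => J i = j), w i := by
    intro j
    rw [hcoord]
    refine Finset.sum_congr rfl fun i _ => ?_
    rw [show (![g i 0, g i 1, (1:ℝ)] : Fin 3 → ℝ) 2 = 1 from rfl, mul_one]
  constructor
  · -- some block has positive weight
    obtain ⟨i₀, hi₀t, hi₀⟩ : ∃ i ∈ t, 0 < w i := by
      by_contra hcon
      push_neg at hcon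
      have : (∑ i ∈ t, w i) ≤ 0 := Finset.sum_nonpos fun i hi => hcon i hi
      linarith [hsum ▸ this]
    refine ⟨J i₀, ?_⟩
    rw [hmu]
    have hle : w i₀ ≤ ∑ i ∈ t.filter (fun i => J i = J i₀), w i :=
      Finset.single_le_sum (fun i hi => hw i (Finset.mem_filter.mp hi).1)
        (Finset.mem_filter.mpr ⟨hi₀t, rfl⟩)
    linarith
  · intro j hpos
    have hA : (fun k : Fin 2 => z (idx3 c j (k.castLE (by norm_num))) / z (idx3 c j 2))
        = (t.filter (fun i => J i = j)).centerMass w g := by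
      funext k
      rw [Finset.centerMass, ← hmu j]
      rw [Pi.smul_apply, Finset.sum_apply]
      rw [smul_eq_mul, div_eq_inv_mul]
      congr 1
      rw [hcoord]
      refine Finset.sum_congr rfl fun i _ => ?_
      rw [Pi.smul_apply, smul_eq_mul]
      congr 1
      fin_cases k <;> simp [Fin.castLE]
    rw [hA]
    refine Finset.centerMass_mem_convexHull _ (fun i hi => hw i (Finset.mem_filter.mp hi).1)
      (by rw [← hmu j]; exact hpos) fun i hi => ?_
    obtain ⟨hit, hJi⟩ := Finset.mem_filter.mp hi
    obtain ⟨hgS, -⟩ := hJg i hit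
    rwa [hJi] at hgS

/-- If the convex hulls of `X j` and `Y j` are disjoint for every `j`, then the convex hulls
of the unions of the lifted sets are disjoint. -/
theorem lift_preserves_disjoint_hulls (c : ℕ) (X Y : Fin c → Set (Fin 2 → ℝ))
    (h : ∀ j, convexHull ℝ (X j) ∩ convexHull ℝ (Y j) = ∅) :
    convexHull ℝ (⋃ j, liftMap c j '' X j) ∩ convexHull ℝ (⋃ j, liftMap c j '' Y j) = ∅ := by
  rw [Set.eq_empty_iff_forall_notMem]
  rintro z ⟨hzX, hzY⟩
  obtain ⟨⟨j, hj⟩, hXmem⟩ := hull_struct c X z hzX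
  obtain ⟨-, hYmem⟩ := hull_struct c Y z hzY
  exact Set.eq_empty_iff_forall_notMem.mp (h j) _ ⟨hXmem j hj, hYmem j hj⟩
end

section
/- Let U ⊆ R^d be a finite set with |U| = n, and let V ⊆ R^d be constructed by adding, for every pair S₁, S₂ ⊆ U with |S₁| + |S₂| ≤ d + 2 and conv(S₁) ∩ conv(S₂) ≠ ∅, one point of conv(S₁) ∩ conv(S₂). Then |V| ≤ (2n)^{d+2}, and for any X, Y ⊆ U: conv(X) ∩ conv(Y) ≠ ∅ if and only if (conv(X) ∩ V) ∩ (conv(Y) ∩ V) ≠ ∅. -/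
open Finset

/-- Key reformulation: the hulls of `X` and `Y` intersect iff `0` lies in the hull of the
lifted point set `{(u,1) : u ∈ X} ∪ {(-v,-1) : v ∈ Y}`. -/
private lemma pr_zero_iff {d : ℕ} [DecidableEq (EuclideanSpace ℝ (Fin d) × ℝ)] (X Y : Finset (EuclideanSpace ℝ (Fin d))) :
    (convexHull ℝ (X : Set (EuclideanSpace ℝ (Fin d))) ∩
      convexHull ℝ (Y : Set (EuclideanSpace ℝ (Fin d)))).Nonempty ↔
    (0 : EuclideanSpace ℝ (Fin d) × ℝ) ∈ convexHull ℝ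
      (((X.image (fun u => (u, (1 : ℝ))) ∪ Y.image (fun v => (-v, (-1 : ℝ)))) :
          Finset (EuclideanSpace ℝ (Fin d) × ℝ)) : Set (EuclideanSpace ℝ (Fin d) × ℝ)) := by
  classical
  set f : EuclideanSpace ℝ (Fin d) → EuclideanSpace ℝ (Fin d) × ℝ := fun u => (u, (1 : ℝ))
    with hf
  set g : EuclideanSpace ℝ (Fin d) → EuclideanSpace ℝ (Fin d) × ℝ := fun v => (-v, (-1 : ℝ))
    with hg
  have hfi : ∀ x ∈ X, ∀ y ∈ X, f x = f y → x = y := fun x _ y _ h => congrArg Prod.fst h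
  have hgi : ∀ x ∈ Y, ∀ y ∈ Y, g x = g y → x = y := fun x _ y _ h =>
    neg_injective (congrArg Prod.fst h)
  have hdisj : Disjoint (X.image f) (Y.image g) := by
    rw [Finset.disjoint_left]
    rintro z hz1 hz2
    simp only [Finset.mem_image, hf, hg] at hz1 hz2
    obtain ⟨u, _, rfl⟩ := hz1
    obtain ⟨v, _, hv⟩ := hz2
    have := congrArg Prod.snd hv
    norm_num at this
  constructor
  · rintro ⟨x, hx, hy⟩
    rw [Finset.mem_convexHull'] at hx hy
    obtain ⟨wX, hwX0, hwX1, hwX2⟩ := hx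
    obtain ⟨wY, hwY0, hwY1, hwY2⟩ := hy
    rw [Finset.mem_convexHull']
    set w : EuclideanSpace ℝ (Fin d) × ℝ → ℝ :=
      fun z => if z.2 = 1 then wX z.1 / 2 else wY (-z.1) / 2 with hw
    have hwf : ∀ u, w (f u) = wX u / 2 := by intro u; simp [hw, hf]
    have hwg : ∀ v, w (g v) = wY v / 2 := by intro v; norm_num [hw, hg]
    refine ⟨w, ?_, ?_, ?_⟩
    · intro z hz
      rcases Finset.mem_union.1 hz with hz | hz <;>
        obtain ⟨u, hu, rfl⟩ := Finset.mem_image.1 hz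
      · rw [hwf]; exact div_nonneg (hwX0 u hu) (by norm_num)
      · rw [hwg]; exact div_nonneg (hwY0 u hu) (by norm_num)
    · rw [Finset.sum_union hdisj, Finset.sum_image hfi, Finset.sum_image hgi]
      simp only [hwf, hwg]
      rw [← Finset.sum_div, ← Finset.sum_div, hwX1, hwY1]
      norm_num
    · rw [Finset.sum_union hdisj, Finset.sum_image hfi, Finset.sum_image hgi]
      simp only [hwf, hwg]
      have h1 : ∑ u ∈ X, (wX u / 2) • f u = ((2 : ℝ)⁻¹ • x, (2 : ℝ)⁻¹) := by
        have : ∀ u, (wX u / 2) • f u = ((2:ℝ)⁻¹ • (wX u • u), (2:ℝ)⁻¹ * wX u) := by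
          intro u
          simp only [hf, Prod.smul_mk, smul_eq_mul]
          exact Prod.ext (by rw [div_eq_inv_mul, mul_smul]) (by ring)
        rw [Finset.sum_congr rfl fun u _ => this u, Prod.ext_iff]
        constructor
        · simp only [Prod.fst_sum, ← Finset.smul_sum, hwX2]
        · simp only [Prod.snd_sum, ← Finset.mul_sum, hwX1, mul_one]
      have h2 : ∑ v ∈ Y, (wY v / 2) • g v = (-((2 : ℝ)⁻¹ • x), -(2 : ℝ)⁻¹) := by
        have : ∀ v, (wY v / 2) • g v = (-((2:ℝ)⁻¹ • (wY v • v)), -((2:ℝ)⁻¹ * wY v)) := by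
          intro v
          simp only [hg, Prod.smul_mk, smul_eq_mul, smul_neg]
          exact Prod.ext (by rw [div_eq_inv_mul, mul_smul]) (by ring)
        rw [Finset.sum_congr rfl fun v _ => this v, Prod.ext_iff]
        constructor
        · simp only [Prod.fst_sum, Finset.sum_neg_distrib, ← Finset.smul_sum, hwY2]
        · simp only [Prod.snd_sum, Finset.sum_neg_distrib, ← Finset.mul_sum, hwY1, mul_one]
      rw [h1, h2, Prod.ext_iff]
      constructor <;> simp
  · intro h0
    rw [Finset.mem_convexHull'] at h0
    obtain ⟨w, hw0, hw1, hw2⟩ := h0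
    rw [Finset.sum_union hdisj, Finset.sum_image hfi, Finset.sum_image hgi] at hw1 hw2
    set a : EuclideanSpace ℝ (Fin d) → ℝ := fun u => w (f u) with ha
    set b : EuclideanSpace ℝ (Fin d) → ℝ := fun v => w (g v) with hb
    have ha0 : ∀ u ∈ X, 0 ≤ a u := fun u hu =>
      hw0 _ (Finset.mem_union_left _ (Finset.mem_image_of_mem f hu))
    have hb0 : ∀ v ∈ Y, 0 ≤ b v := fun v hv =>
      hw0 _ (Finset.mem_union_right _ (Finset.mem_image_of_mem g hv))
    have hfst := congrArg Prod.fst hw2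
    have hsnd := congrArg Prod.snd hw2
    simp only [hf, hg, Prod.smul_mk, Prod.fst_add, Prod.snd_add, Prod.fst_sum, Prod.snd_sum,
      Prod.fst_zero, Prod.snd_zero, smul_eq_mul, mul_one, mul_neg_one, smul_neg,
      Finset.sum_neg_distrib, ← sub_eq_add_neg, ← ha, ← hb] at hfst hsnd
    have hp : ∑ u ∈ X, a u • u = ∑ v ∈ Y, b v • v := sub_eq_zero.1 hfst
    have hAB : ∑ u ∈ X, a u = ∑ v ∈ Y, b v := sub_eq_zero.1 hsnd
    have hA : ∑ u ∈ X, a u = 1 / 2 := by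
      have h1 : ∑ u ∈ X, a u + ∑ v ∈ Y, b v = 1 := hw1
      linarith
    have hB : ∑ v ∈ Y, b v = 1 / 2 := by
      have h1 : ∑ u ∈ X, a u + ∑ v ∈ Y, b v = 1 := hw1
      linarith
    refine ⟨(2 : ℝ) • ∑ u ∈ X, a u • u, ?_, ?_⟩
    · rw [Finset.mem_convexHull']
      refine ⟨fun u => 2 * a u, fun u hu => by dsimp only; linarith [ha0 u hu], ?_, ?_⟩
      · rw [← Finset.mul_sum, hA]; norm_num
      · simp only [mul_smul, ← Finset.smul_sum]
    · rw [Finset.mem_convexHull']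
      refine ⟨fun v => 2 * b v, fun v hv => by dsimp only; linarith [hb0 v hv], ?_, ?_⟩
      · rw [← Finset.mul_sum, hB]; norm_num
      · simp only [mul_smul, ← Finset.smul_sum, hp]

/-- Symmetric Carathéodory: if the hulls of `X` and `Y` intersect, then they contain subsets
`S₁, S₂` with `|S₁| + |S₂| ≤ d + 2` whose hulls already intersect. -/
private lemma pr_symcar {d : ℕ} [DecidableEq (EuclideanSpace ℝ (Fin d) × ℝ)] (X Y : Finset (EuclideanSpace ℝ (Fin d)))
    (h : (convexHull ℝ (X : Set (EuclideanSpace ℝ (Fin d))) ∩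
      convexHull ℝ (Y : Set (EuclideanSpace ℝ (Fin d)))).Nonempty) :
    ∃ S₁ S₂ : Finset (EuclideanSpace ℝ (Fin d)), S₁ ⊆ X ∧ S₂ ⊆ Y ∧
      S₁.card + S₂.card ≤ d + 2 ∧
      (convexHull ℝ (S₁ : Set (EuclideanSpace ℝ (Fin d))) ∩
        convexHull ℝ (S₂ : Set (EuclideanSpace ℝ (Fin d)))).Nonempty := by
  classical
  rw [pr_zero_iff] at h
  rw [convexHull_eq_union] at h
  simp only [Set.mem_iUnion] at h
  obtain ⟨t, hts, hindep, h0⟩ := h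
  have hcard : t.card ≤ d + 2 := by
    have h1 := hindep.card_le_finrank_succ
    have h2 : Module.finrank ℝ
        (vectorSpan ℝ (Set.range ((↑) : t → EuclideanSpace ℝ (Fin d) × ℝ))) ≤
        Module.finrank ℝ (EuclideanSpace ℝ (Fin d) × ℝ) := Submodule.finrank_le _
    have h3 : Module.finrank ℝ (EuclideanSpace ℝ (Fin d) × ℝ) = d + 1 := by
      rw [Module.finrank_prod, finrank_euclideanSpace_fin, Module.finrank_self]
    rw [Fintype.card_coe] at h1
    omega
  set f : EuclideanSpace ℝ (Fin d) → EuclideanSpace ℝ (Fin d) × ℝ := fun u => (u, (1 : ℝ))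
    with hf
  set g : EuclideanSpace ℝ (Fin d) → EuclideanSpace ℝ (Fin d) × ℝ := fun v => (-v, (-1 : ℝ))
    with hg
  set S₁ : Finset (EuclideanSpace ℝ (Fin d)) := X.filter (fun u => f u ∈ t) with hS₁
  set S₂ : Finset (EuclideanSpace ℝ (Fin d)) := Y.filter (fun v => g v ∈ t) with hS₂
  have ht : t = S₁.image f ∪ S₂.image g := by
    ext z
    constructor
    · intro hz
      have hz' := hts hz
      simp only [Finset.coe_union, Set.mem_union, Finset.coe_image, Set.mem_image,
        Finset.mem_coe] at hz'
      rcases hz' with ⟨u, hu, rfl⟩ | ⟨v, hv, rfl⟩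
      · exact Finset.mem_union_left _ (Finset.mem_image_of_mem _
          (Finset.mem_filter.2 ⟨hu, hz⟩))
      · exact Finset.mem_union_right _ (Finset.mem_image_of_mem _
          (Finset.mem_filter.2 ⟨hv, hz⟩))
    · intro hz
      rcases Finset.mem_union.1 hz with hz | hz <;>
        · obtain ⟨u, hu, rfl⟩ := Finset.mem_image.1 hz
          exact (Finset.mem_filter.1 hu).2
  have hfinj : Function.Injective f := fun x y h => congrArg Prod.fst h
  have hginj : Function.Injective g := fun x y h => neg_injective (congrArg Prod.fst h)
  have hdisj : Disjoint (S₁.image f) (S₂.image g) := by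
    rw [Finset.disjoint_left]
    rintro z hz1 hz2
    simp only [Finset.mem_image, hf, hg] at hz1 hz2
    obtain ⟨u, _, rfl⟩ := hz1
    obtain ⟨v, _, hv⟩ := hz2
    have := congrArg Prod.snd hv
    norm_num at this
  refine ⟨S₁, S₂, Finset.filter_subset _ _, Finset.filter_subset _ _, ?_, ?_⟩
  · calc S₁.card + S₂.card = (S₁.image f).card + (S₂.image g).card := by
          rw [Finset.card_image_of_injective _ hfinj, Finset.card_image_of_injective _ hginj]
      _ = (S₁.image f ∪ S₂.image g).card := (Finset.card_union_of_disjoint hdisj).symm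
      _ = t.card := by rw [← ht]
      _ ≤ d + 2 := hcard
  · rw [pr_zero_iff]
    rw [ht] at h0
    exact h0

/-- Counting lemma: a family of pairs of nonempty subsets of `U` with total size at most `k`
has at most `(2n)^k` members, where `n = |U| ≥ 1`. -/
private lemma pr_count {α : Type*} [DecidableEq α] (k n : ℕ) (hn : 1 ≤ n)
    (U : Finset α) (hU : U.card = n) (P : Finset (Finset α × Finset α))
    (hP : ∀ p ∈ P, p.1 ⊆ U ∧ p.2 ⊆ U ∧ p.1.card + p.2.card ≤ k ∧ p.1.Nonempty) :
    P.card ≤ (2 * n) ^ k := by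
  classical
  have h2n : 0 < 2 * n := by omega
  set idx : α → ℕ := fun x => min (U.toList.idxOf x) (n - 1) with hidx
  have hidxlt : ∀ x, idx x ≤ n - 1 := fun x => min_le_right _ _
  have hidxU : ∀ x ∈ U, idx x = U.toList.idxOf x := by
    intro x hx
    have h1 : U.toList.idxOf x < n := by
      have := List.idxOf_lt_length_iff.2 (Finset.mem_toList.2 hx)
      rwa [Finset.length_toList, hU] at this
    simp only [hidx]
    omega
  have hidxinj : ∀ x ∈ U, ∀ y ∈ U, idx x = idx y → x = y := by
    intro x hx y hy hxy
    rw [hidxU x hx, hidxU y hy] at hxy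
    exact (List.idxOf_inj (Finset.mem_toList.2 hx)).1 hxy
  set enc : Bool → α → Fin (2 * n) := fun b x =>
    ⟨2 * idx x + b.toNat, by
      have := hidxlt x
      rcases b <;> simp only [Bool.toNat_false, Bool.toNat_true] <;> omega⟩ with henc
  have hencinj : ∀ b b' : Bool, ∀ x ∈ U, ∀ y ∈ U, enc b x = enc b' y → b = b' ∧ x = y := by
    intro b b' x hx y hy h
    have hv : 2 * idx x + b.toNat = 2 * idx y + b'.toNat := congrArg Fin.val h
    rcases b <;> rcases b' <;>
      simp only [Bool.toNat_false, Bool.toNat_true] at hv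
    · exact ⟨rfl, hidxinj x hx y hy (by omega)⟩
    · omega
    · omega
    · exact ⟨rfl, hidxinj x hx y hy (by omega)⟩
  set T : Finset α × Finset α → Finset (Fin (2 * n)) :=
    fun p => p.1.image (enc false) ∪ p.2.image (enc true) with hT
  set pad : Finset α × Finset α → Fin (2 * n) :=
    fun p => if h : (T p).Nonempty then (T p).min' h else ⟨0, h2n⟩ with hpad
  set G : Finset α × Finset α → (Fin k → Fin (2 * n)) :=
    fun p i => ((T p).sort (· ≤ ·)).getD i (pad p) with hG
  have key : ∀ p ∈ P, Finset.image (G p) Finset.univ = T p := by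
    intro p hp
    obtain ⟨h1, h2, h3, h4⟩ := hP p hp
    have hTne : (T p).Nonempty := by
      obtain ⟨x, hx⟩ := h4
      exact ⟨enc false x, Finset.mem_union_left _ (Finset.mem_image_of_mem _ hx)⟩
    have hTcard : (T p).card ≤ k :=
      le_trans (Finset.card_union_le _ _)
        (le_trans (add_le_add Finset.card_image_le Finset.card_image_le) h3)
    have hlen : ((T p).sort (· ≤ ·)).length = (T p).card := Finset.length_sort _
    apply Finset.Subset.antisymm
    · intro j hj
      obtain ⟨i, _, rfl⟩ := Finset.mem_image.1 hj
      by_cases hik : (i : ℕ) < ((T p).sort (· ≤ ·)).length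
      · have hmem : G p i ∈ (T p).sort (· ≤ ·) := by
          simp only [hG]
          rw [List.getD_eq_getElem _ _ hik]
          exact List.getElem_mem _
        exact (Finset.mem_sort _).1 hmem
      · have hpd : G p i = pad p := by
          simp only [hG]
          exact List.getD_eq_default _ _ (le_of_not_gt hik)
        rw [hpd, hpad]
        simp only [dif_pos hTne]
        exact Finset.min'_mem _ _
    · intro j hj
      have hjl : j ∈ (T p).sort (· ≤ ·) := (Finset.mem_sort _).2 hj
      obtain ⟨m, hm, hjm⟩ := List.mem_iff_getElem.1 hjl
      have hmk : m < k := lt_of_lt_of_le (by rwa [hlen] at hm) hTcard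
      refine Finset.mem_image.2 ⟨⟨m, hmk⟩, Finset.mem_univ _, ?_⟩
      simp only [hG]
      rw [List.getD_eq_getElem _ _ (by simpa using hm)]
      exact hjm
  have recov : ∀ p ∈ P, p.1 = U.filter (fun x => enc false x ∈ T p) ∧
      p.2 = U.filter (fun x => enc true x ∈ T p) := by
    intro p hp
    obtain ⟨h1, h2, -, -⟩ := hP p hp
    constructor
    · ext x
      simp only [Finset.mem_filter]
      constructor
      · intro hx
        exact ⟨h1 hx, Finset.mem_union_left _ (Finset.mem_image_of_mem _ hx)⟩
      · rintro ⟨hxU, hxT⟩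
        rcases Finset.mem_union.1 hxT with hmem | hmem
        · obtain ⟨y, hy, hyx⟩ := Finset.mem_image.1 hmem
          obtain ⟨-, rfl⟩ := hencinj false false y (h1 hy) x hxU hyx
          exact hy
        · obtain ⟨y, hy, hyx⟩ := Finset.mem_image.1 hmem
          obtain ⟨hbf, -⟩ := hencinj true false y (h2 hy) x hxU hyx
          exact absurd hbf (by simp)
    · ext x
      simp only [Finset.mem_filter]
      constructor
      · intro hx
        exact ⟨h2 hx, Finset.mem_union_right _ (Finset.mem_image_of_mem _ hx)⟩
      · rintro ⟨hxU, hxT⟩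
        rcases Finset.mem_union.1 hxT with hmem | hmem
        · obtain ⟨y, hy, hyx⟩ := Finset.mem_image.1 hmem
          obtain ⟨hbf, -⟩ := hencinj false true y (h1 hy) x hxU hyx
          exact absurd hbf (by simp)
        · obtain ⟨y, hy, hyx⟩ := Finset.mem_image.1 hmem
          obtain ⟨-, rfl⟩ := hencinj true true y (h2 hy) x hxU hyx
          exact hy
  have hinj : Set.InjOn G ↑P := by
    intro p hp q hq hGpq
    rw [Finset.mem_coe] at hp hq
    have hTpq : T p = T q := by rw [← key p hp, ← key q hq, hGpq]
    obtain ⟨e1, e2⟩ := recov p hp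
    obtain ⟨e3, e4⟩ := recov q hq
    have hq1 : p.1 = q.1 := by rw [e1, e3, hTpq]
    have hq2 : p.2 = q.2 := by rw [e2, e4, hTpq]
    exact Prod.ext hq1 hq2
  calc P.card ≤ (Finset.univ : Finset (Fin k → Fin (2 * n))).card :=
        Finset.card_le_card_of_injOn G (fun p _ => Finset.mem_univ _) hinj
    _ = (2 * n) ^ k := by
        rw [Finset.card_univ, Fintype.card_fun, Fintype.card_fin, Fintype.card_fin]

/-- Reduction from convex set disjointness to its promise variant: for every finite set `U`
of `n` points in `ℝ^d` there is a set `V` of at most `(2n)^(d+2)` points such that, for all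
`X, Y ⊆ U`, the convex hulls of `X` and `Y` intersect iff the sets `conv(X) ∩ V` and
`conv(Y) ∩ V` intersect. -/
theorem promise_reduction (d n : ℕ) (U : Finset (EuclideanSpace ℝ (Fin d)))
    (hU : U.card = n) :
    ∃ V : Finset (EuclideanSpace ℝ (Fin d)),
      V.card ≤ (2 * n) ^ (d + 2) ∧
      (∀ S₁ S₂ : Finset (EuclideanSpace ℝ (Fin d)), S₁ ⊆ U → S₂ ⊆ U →
        S₁.card + S₂.card ≤ d + 2 →
        (convexHull ℝ (S₁ : Set (EuclideanSpace ℝ (Fin d))) ∩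
            convexHull ℝ (S₂ : Set (EuclideanSpace ℝ (Fin d)))).Nonempty →
        ∃ v ∈ V, v ∈ convexHull ℝ (S₁ : Set (EuclideanSpace ℝ (Fin d))) ∩
            convexHull ℝ (S₂ : Set (EuclideanSpace ℝ (Fin d)))) ∧
      ∀ X Y : Finset (EuclideanSpace ℝ (Fin d)), X ⊆ U → Y ⊆ U →
        ((convexHull ℝ (X : Set (EuclideanSpace ℝ (Fin d))) ∩
            convexHull ℝ (Y : Set (EuclideanSpace ℝ (Fin d)))).Nonempty ↔
          ((convexHull ℝ (X : Set (EuclideanSpace ℝ (Fin d))) ∩ ↑V) ∩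
            (convexHull ℝ (Y : Set (EuclideanSpace ℝ (Fin d))) ∩ ↑V)).Nonempty) := by
  classical
  set P : Finset (Finset (EuclideanSpace ℝ (Fin d)) × Finset (EuclideanSpace ℝ (Fin d))) :=
    (U.powerset ×ˢ U.powerset).filter (fun p =>
      p.1.card + p.2.card ≤ d + 2 ∧
      (convexHull ℝ (p.1 : Set (EuclideanSpace ℝ (Fin d))) ∩
        convexHull ℝ (p.2 : Set (EuclideanSpace ℝ (Fin d)))).Nonempty) with hP
  set wit : Finset (EuclideanSpace ℝ (Fin d)) × Finset (EuclideanSpace ℝ (Fin d)) →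
      EuclideanSpace ℝ (Fin d) := fun p =>
    if h : (convexHull ℝ (p.1 : Set (EuclideanSpace ℝ (Fin d))) ∩
        convexHull ℝ (p.2 : Set (EuclideanSpace ℝ (Fin d)))).Nonempty then h.some else 0
    with hwit
  have hwitspec : ∀ S₁ S₂ : Finset (EuclideanSpace ℝ (Fin d)),
      (h : (convexHull ℝ (S₁ : Set (EuclideanSpace ℝ (Fin d))) ∩
        convexHull ℝ (S₂ : Set (EuclideanSpace ℝ (Fin d)))).Nonempty) →
      wit (S₁, S₂) ∈ convexHull ℝ (S₁ : Set (EuclideanSpace ℝ (Fin d))) ∩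
        convexHull ℝ (S₂ : Set (EuclideanSpace ℝ (Fin d))) := by
    intro S₁ S₂ h
    rw [hwit]
    simp only [dif_pos h]
    exact h.some_mem
  have hmemP : ∀ S₁ S₂ : Finset (EuclideanSpace ℝ (Fin d)), S₁ ⊆ U → S₂ ⊆ U →
      S₁.card + S₂.card ≤ d + 2 →
      (convexHull ℝ (S₁ : Set (EuclideanSpace ℝ (Fin d))) ∩
        convexHull ℝ (S₂ : Set (EuclideanSpace ℝ (Fin d)))).Nonempty → (S₁, S₂) ∈ P := by
    intro S₁ S₂ h1 h2 hc hne
    rw [hP, Finset.mem_filter, Finset.mem_product]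
    exact ⟨⟨Finset.mem_powerset.2 h1, Finset.mem_powerset.2 h2⟩, hc, hne⟩
  refine ⟨P.image wit, ?_, ?_, ?_⟩
  · refine le_trans Finset.card_image_le ?_
    rcases Nat.eq_zero_or_pos n with rfl | hn
    · have hPe : P = ∅ := by
        apply Finset.eq_empty_of_forall_notMem
        rintro ⟨S₁, S₂⟩ hp
        rw [hP, Finset.mem_filter, Finset.mem_product] at hp
        obtain ⟨⟨hs1, _⟩, _, hne⟩ := hp
        have hU0 : U = ∅ := Finset.card_eq_zero.1 hU
        have hS10 : S₁ = ∅ := Finset.subset_empty.1 (hU0 ▸ Finset.mem_powerset.1 hs1)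
        rw [hS10] at hne
        simp only [Finset.coe_empty, convexHull_empty, Set.empty_inter] at hne
        exact Set.not_nonempty_empty hne
      rw [hPe]
      simp
    · refine pr_count (d + 2) n hn U hU P ?_
      rintro ⟨S₁, S₂⟩ hp
      rw [hP, Finset.mem_filter, Finset.mem_product] at hp
      obtain ⟨⟨hs1, hs2⟩, hc, hne⟩ := hp
      refine ⟨Finset.mem_powerset.1 hs1, Finset.mem_powerset.1 hs2, hc, ?_⟩
      rcases Finset.eq_empty_or_nonempty S₁ with rfl | hne1
      · simp only [Finset.coe_empty, convexHull_empty, Set.empty_inter] at hne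
        exact absurd hne Set.not_nonempty_empty
      · exact hne1
  · intro S₁ S₂ h1 h2 hc hne
    exact ⟨wit (S₁, S₂), Finset.mem_image_of_mem _ (hmemP S₁ S₂ h1 h2 hc hne),
      hwitspec S₁ S₂ hne⟩
  · intro X Y hX hY
    constructor
    · intro h
      obtain ⟨S₁, S₂, hs1, hs2, hc, hne⟩ := pr_symcar X Y h
      have hp : (S₁, S₂) ∈ P := hmemP S₁ S₂ (hs1.trans hX) (hs2.trans hY) hc hne
      have hw := hwitspec S₁ S₂ hne
      have hV : wit (S₁, S₂) ∈ (↑(P.image wit) : Set (EuclideanSpace ℝ (Fin d))) :=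
        Finset.mem_coe.2 (Finset.mem_image_of_mem _ hp)
      exact ⟨wit (S₁, S₂),
        ⟨convexHull_mono (Finset.coe_subset.2 hs1) hw.1, hV⟩,
        ⟨convexHull_mono (Finset.coe_subset.2 hs2) hw.2, hV⟩⟩
    · rintro ⟨v, ⟨hvX, -⟩, hvY, -⟩
      exact ⟨v, hvX, hvY⟩
end

section
/- Let F ⊆ 2^X be a finite family of subsets of a finite set X, let k ≥ 1, and suppose F has VC dimension at most d. Then the family of all sets of the form F₁ ∩ F₂ ∩ ... ∩ F_k with each F_i ∈ F has VC dimension at most O(k d log k) (in particular, at most c·k·d·log k for an absolute constant c, for k ≥ 2). -/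
/-- A family `ℱ` shatters a finite set `Y` if every subset of `Y` is the trace of a member
of `ℱ` on `Y`. -/
def Shatters {α : Type*} (ℱ : Set (Set α)) (Y : Finset α) : Prop :=
  ∀ Z : Set α, Z ⊆ ↑Y → ∃ F ∈ ℱ, (Y : Set α) ∩ F = Z

open Finset in
lemma counting {α : Type} [Fintype α] [DecidableEq α] (ℱ : Set (Set α)) (hℱ : ℱ.Finite)
    (k : ℕ) (hk : 1 ≤ k) (Y : Finset α)
    (hsh : Shatters {S | ∃ F : Fin k → Set α, (∀ i, F i ∈ ℱ) ∧ S = ⋂ i, F i} Y) :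
    ∃ 𝒜 : Finset (Finset α), 𝒜 ⊆ Y.powerset ∧
      (∀ s, 𝒜.Shatters s → Shatters ℱ s) ∧ 2 ^ Y.card ≤ 𝒜.card ^ k := by
  classical
  set 𝒜 : Finset (Finset α) := hℱ.toFinset.image (fun F => Y.filter (· ∈ F)) with h𝒜
  have htr : ∀ F : Set α, ((Y.filter (· ∈ F) : Finset α) : Set α) = (Y : Set α) ∩ F := by
    intro F; ext x; simp [Set.mem_inter_iff]
  refine ⟨𝒜, ?_, ?_, ?_⟩
  · intro u hu
    simp only [h𝒜, mem_image] at hu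
    obtain ⟨F, _, rfl⟩ := hu
    exact mem_powerset.2 (filter_subset _ _)
  · intro s hs Z hZ
    have hsY : s ⊆ Y := by
      obtain ⟨u, hu, hsu⟩ := hs (Finset.Subset.rfl)
      have : s ⊆ u := by rw [← hsu]; exact inter_subset_right
      refine this.trans ?_
      simp only [h𝒜, mem_image] at hu
      obtain ⟨F, _, rfl⟩ := hu
      exact filter_subset _ _
    set t : Finset α := s.filter (· ∈ Z) with ht
    have htZ : (t : Set α) = Z := by
      ext x; simp only [ht, coe_filter, Set.mem_setOf_eq, mem_coe]
      exact ⟨fun h => h.2, fun h => ⟨hZ h, h⟩⟩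
    obtain ⟨u, hu, hsu⟩ := hs (filter_subset _ _ : t ⊆ s)
    simp only [h𝒜, mem_image] at hu
    obtain ⟨F, hF, rfl⟩ := hu
    refine ⟨F, (Set.Finite.mem_toFinset hℱ).1 hF, ?_⟩
    rw [← htZ, ht, ← hsu]
    ext x
    simp only [Set.mem_inter_iff, mem_coe, coe_inter, mem_filter]
    constructor
    · rintro ⟨h1, h2⟩; exact ⟨h1, hsY h1, h2⟩
    · rintro ⟨h1, _, h3⟩; exact ⟨h1, h3⟩
  · -- counting
    have : Nonempty (Fin k) := ⟨⟨0, hk⟩⟩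
    choose G hG hGeq using fun (Z : {Z // Z ∈ Y.powerset}) =>
      hsh (Z : Set α) (by exact_mod_cast mem_powerset.1 Z.2)
    -- G Z ∈ the intersection family; unpack
    have : ∀ Z : {Z // Z ∈ Y.powerset}, ∃ F : Fin k → Set α, (∀ i, F i ∈ ℱ) ∧
        (Y : Set α) ∩ (⋂ i, F i) = (Z : Set α) := by
      intro Z
      obtain ⟨F, hF, hGF⟩ := hG Z
      exact ⟨F, hF, by rw [← hGF]; exact hGeq Z⟩
    choose F hF hFeq using this
    have hinj : Function.Injective
        (fun Z : {Z // Z ∈ Y.powerset} => fun i : Fin k => (⟨Y.filter (· ∈ F Z i),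
          mem_image.2 ⟨F Z i, (Set.Finite.mem_toFinset hℱ).2 (hF Z i), rfl⟩⟩ : {u // u ∈ 𝒜})) := by
      intro Z Z' h
      have h2 : ∀ i, (Y : Set α) ∩ F Z i = (Y : Set α) ∩ F Z' i := by
        intro i
        have := congrFun h i
        simp only [Subtype.mk_eq_mk] at this
        rw [← htr, ← htr, this]
      have : ((Z : Finset α) : Set α) = ((Z' : Finset α) : Set α) := by
        rw [← hFeq Z, ← hFeq Z', Set.inter_iInter, Set.inter_iInter]
        exact congrArg _ (funext h2)
      exact Subtype.ext (by exact_mod_cast Finset.coe_injective this)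
    calc 2 ^ Y.card = Fintype.card {Z // Z ∈ Y.powerset} := by
            rw [Fintype.card_coe, card_powerset]
      _ ≤ Fintype.card (Fin k → {u // u ∈ 𝒜}) := Fintype.card_le_of_injective _ hinj
      _ = 𝒜.card ^ k := by simp [Fintype.card_coe]

open Finset in
lemma sauer_bound {α : Type} [DecidableEq α] (𝒜 : Finset (Finset α)) (Y : Finset α) (d : ℕ)
    (h𝒜 : 𝒜 ⊆ Y.powerset) (hd : ∀ s, 𝒜.Shatters s → s.card ≤ d) :
    𝒜.card ≤ ∑ i ∈ range (d+1), (Y.card).choose i := by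
  refine (Finset.card_le_card_shatterer 𝒜).trans ?_
  have hsub : 𝒜.shatterer ⊆ (range (d+1)).biUnion (fun i => Y.powersetCard i) := by
    intro s hs
    rw [mem_shatterer] at hs
    obtain ⟨u, hu, hsu⟩ := hs.exists_superset
    have hsY : s ⊆ Y := hsu.trans (mem_powerset.1 (h𝒜 hu))
    simp only [mem_biUnion, mem_range, mem_powersetCard]
    exact ⟨s.card, Nat.lt_succ_of_le (hd s hs), hsY, rfl⟩
  refine (card_le_card hsub).trans ?_
  refine (card_biUnion_le).trans ?_
  exact le_of_eq (Finset.sum_congr rfl fun i _ => card_powersetCard i Y)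

open Finset in
lemma binom_sum_bound (m d : ℕ) (hd : 1 ≤ d) (hdm : d ≤ m) :
    (∑ i ∈ range (d+1), ((m.choose i : ℝ))) ≤ Real.exp d * ((m:ℝ)/d)^d := by
  have hm : 0 < (m:ℝ) := by
    have : 0 < m := by omega
    exact_mod_cast this
  have hd' : 0 < (d:ℝ) := by exact_mod_cast hd
  set x : ℝ := (d:ℝ)/(m:ℝ) with hx
  have hx0 : 0 < x := by positivity
  have hx1 : x ≤ 1 := by
    rw [hx, div_le_one hm]; exact_mod_cast hdm
  have key : (∑ i ∈ range (d+1), ((m.choose i : ℝ))) * x^d ≤ Real.exp d := by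
    calc (∑ i ∈ range (d+1), ((m.choose i : ℝ))) * x^d
        = ∑ i ∈ range (d+1), ((m.choose i : ℝ)) * x^d := by rw [Finset.sum_mul]
      _ ≤ ∑ i ∈ range (d+1), ((m.choose i : ℝ)) * x^i := by
          refine Finset.sum_le_sum fun i hi => ?_
          refine mul_le_mul_of_nonneg_left ?_ (by positivity)
          exact pow_le_pow_of_le_one hx0.le hx1 (Nat.lt_succ_iff.1 (mem_range.1 hi))
      _ ≤ ∑ i ∈ range (m+1), ((m.choose i : ℝ)) * x^i := by
          refine Finset.sum_le_sum_of_subset_of_nonneg ?_ (fun i _ _ => by positivity)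
          exact Finset.range_subset_range.2 (by omega)
      _ = (x + 1)^m := by
          rw [add_pow]
          refine Finset.sum_congr rfl fun i _ => ?_
          rw [one_pow, mul_one]; ring
      _ ≤ (Real.exp x)^m := by
          refine pow_le_pow_left₀ (by positivity) ?_ m
          exact Real.add_one_le_exp x
      _ = Real.exp (x * m) := by rw [← Real.exp_nat_mul]; ring_nf
      _ = Real.exp d := by rw [hx]; field_simp
  have hxd : 0 < x^d := by positivity
  rw [← le_div_iff₀ hxd] at key
  refine key.trans (le_of_eq ?_)
  rw [hx, div_pow, div_pow, div_div_eq_mul_div, mul_div_assoc]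

lemma arith (m d k : ℕ) (hk : 2 ≤ k) (hd : 1 ≤ d) (hdm : d ≤ m)
    (h : (2:ℝ)^m ≤ (Real.exp d * ((m:ℝ)/d)^d)^k) :
    (m:ℝ) ≤ 7 * k * d * Real.log k := by
  have hd' : 0 < (d:ℝ) := by exact_mod_cast hd
  have hm' : 0 < (m:ℝ) := lt_of_lt_of_le hd' (by exact_mod_cast hdm)
  have hk' : 0 < (k:ℝ) := by positivity
  have hlogk : Real.log 2 ≤ Real.log k := by
    apply Real.log_le_log (by norm_num); exact_mod_cast hk
  have hlog2 : (0.6931471803 : ℝ) < Real.log 2 := Real.log_two_gt_d9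
  -- take logs
  have hpos : (0:ℝ) < Real.exp d * ((m:ℝ)/d)^d := by positivity
  have h1 : (m:ℝ) * Real.log 2 ≤ (k:ℝ) * ((d:ℝ) + (d:ℝ) * Real.log ((m:ℝ)/d)) := by
    have := Real.log_le_log (by positivity) h
    rw [Real.log_pow, Real.log_pow, Real.log_mul (by positivity) (by positivity),
      Real.log_exp, Real.log_pow] at this
    exact_mod_cast this
  set t : ℝ := (m:ℝ) / ((d:ℝ) * k) with hts
  have ht : 0 < t := by positivity
  have hmt : (m:ℝ) = t * ((d:ℝ) * k) := by rw [hts]; field_simp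
  have hmd : (m:ℝ)/d = t * k := by rw [hmt]; field_simp
  have h2 : t * Real.log 2 ≤ 1 + Real.log t + Real.log k := by
    rw [hmd, hmt, Real.log_mul ht.ne' hk'.ne'] at h1
    have hdk : 0 < (d:ℝ) * k := by positivity
    rw [← mul_le_mul_iff_of_pos_right hdk]
    linear_combination h1
  have h3 : Real.log t ≤ t/4 + Real.log 4 - 1 := by
    have : Real.log (t/4) ≤ t/4 - 1 := Real.log_le_sub_one_of_pos (by positivity)
    have h4 : Real.log t = Real.log (t/4) + Real.log 4 := by
      rw [← Real.log_mul (by positivity) (by norm_num)]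
      congr 1; ring
    linarith
  have hlog4 : Real.log 4 = 2 * Real.log 2 := by
    rw [show (4:ℝ) = 2^2 by norm_num, Real.log_pow]; push_cast; ring
  have h5 : t * (Real.log 2 - 1/4) ≤ 3 * Real.log k := by
    nlinarith [h2, h3, hlog4, hlogk]
  have h6 : t ≤ 7 * Real.log k := by
    nlinarith [h5, hlog2, ht, Real.log_pos (by exact_mod_cast hk : (1:ℝ) < k)]
  calc (m:ℝ) = t * ((d:ℝ) * k) := hmt
    _ ≤ (7 * Real.log k) * ((d:ℝ) * k) := by
        refine mul_le_mul_of_nonneg_right h6 (by positivity)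
    _ = 7 * k * d * Real.log k := by ring

/-- VC dimension of `k`-fold intersections: there is an absolute constant `c` such that if a
finite family `ℱ` of subsets of a finite set `X` has VC dimension at most `d`, then for
`k ≥ 2` the family of `k`-fold intersections of members of `ℱ` has VC dimension at most
`c · k · d · log k`. -/
theorem vc_of_intersections :
    ∃ c : ℝ, 0 < c ∧
      ∀ {α : Type} [Fintype α] (ℱ : Set (Set α)) (d k : ℕ),
        ℱ.Finite → 2 ≤ k →
        (∀ Y : Finset α, Shatters ℱ Y → Y.card ≤ d) →
        ∀ Y : Finset α,
          Shatters {S | ∃ F : Fin k → Set α, (∀ i, F i ∈ ℱ) ∧ S = ⋂ i, F i} Y →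
          (Y.card : ℝ) ≤ c * k * d * Real.log k := by
  classical
  refine ⟨7, by norm_num, ?_⟩
  intro α _ ℱ d k hfin hk hvc Y hY
  obtain ⟨𝒜, h𝒜Y, hshat, hcount⟩ := counting ℱ hfin k (by omega) Y hY
  have hNd : 𝒜.card ≤ ∑ i ∈ Finset.range (d+1), (Y.card).choose i :=
    sauer_bound 𝒜 Y d h𝒜Y (fun s hs => hvc s (hshat s hs))
  set m := Y.card with hm
  have hk' : (0:ℝ) < k := by positivity
  have hlogk : (0:ℝ) < Real.log k := Real.log_pos (by exact_mod_cast hk)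
  have hlog2 : Real.log 2 ≤ Real.log k := by
    apply Real.log_le_log (by norm_num); exact_mod_cast hk
  have hlog2' : (0.6931471803 : ℝ) < Real.log 2 := Real.log_two_gt_d9
  rcases Nat.eq_zero_or_pos d with hd0 | hd
  · -- d = 0 : family shatters nothing nonempty, m = 0
    subst hd0
    have h1 : 𝒜.card ≤ 1 := by simpa using hNd
    have : 2 ^ m ≤ 1 := hcount.trans (by
      calc 𝒜.card ^ k ≤ 1 ^ k := Nat.pow_le_pow_left h1 k
        _ = 1 := one_pow k)
    have hm0 : m = 0 := by
      by_contra hne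
      have : 2 ≤ 2 ^ m := Nat.one_lt_two_pow_iff.2 hne
      omega
    rw [hm0]
    simp
  · rcases lt_or_ge m d with hmd | hdm
    · -- m < d : trivial since 7 k log k ≥ 1
      have h1 : (m:ℝ) ≤ d := by exact_mod_cast hmd.le
      have hk2 : (2:ℝ) ≤ k := by exact_mod_cast hk
      have hd' : (0:ℝ) ≤ d := by positivity
      have h2 : (2:ℝ) * 0.6931471803 ≤ (k:ℝ) * Real.log k :=
        mul_le_mul hk2 (le_trans hlog2'.le hlog2) (by norm_num) (by linarith)
      have h3 : (1:ℝ) ≤ 7 * ((k:ℝ) * Real.log k) := by nlinarith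
      calc (m:ℝ) ≤ d := h1
        _ = (d:ℝ) * 1 := (mul_one _).symm
        _ ≤ (d:ℝ) * (7 * ((k:ℝ) * Real.log k)) := mul_le_mul_of_nonneg_left h3 hd'
        _ = 7 * k * d * Real.log k := by ring
    · -- main case
      have hreal : (2:ℝ)^m ≤ (Real.exp d * ((m:ℝ)/d)^d)^k := by
        calc (2:ℝ)^m ≤ ((𝒜.card : ℝ))^k := by exact_mod_cast hcount
          _ ≤ (∑ i ∈ Finset.range (d+1), ((m.choose i : ℝ)))^k := by
              refine pow_le_pow_left₀ (by positivity) ?_ k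
              exact_mod_cast hNd
          _ ≤ (Real.exp d * ((m:ℝ)/d)^d)^k := by
              refine pow_le_pow_left₀ (by positivity) ?_ k
              exact binom_sum_bound m d hd hdm
      exact arith m d k hk hd hdm hreal
end
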